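/- Let A : ℝ → ℝ be continuously differentiable with A(x) ≤ −a₀ for some a₀ > 0 and all x ∈ ℝ, with ∫_ℝ (1 + |t|)·|A′(t)| dt < ∞, and let r₀ : ℝ → ℝ be a bounded differentiable function with r₀ > 0 solving r₀′(x) = A(x)/r₀(x) + 1 on ℝ. Then: (i) for every t ∈ ℝ, every differentiable solution r of r′(x) = A(x)/r(x) + 1 with r(t) > r₀(t) remains positive, is defined on [t, ∞), and satisfies r(x) → +∞ as x → +∞; (ii) every differentiable solution r with 0 < r(t) < r₀(t) cannot remain positive for all x ≥ t, i.e. there is x₀⁽⁰⁾ > t with r(x) → 0 as x → x₀⁽⁰⁾. -/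

import Mathlib

/-!
Two characteristics `r` and `s` have a gap `u = r - s` obeying `u' = -A u / (r s)`. Since
`A < 0`, a positive gap can never close (it even increases), and while `r` stays below a bound
`M` the gap grows at least at the rate `a₀ u(t) / M²`, which is impossible for a bounded `r`.
Hence a characteristic starting above the horizon `r₀` is unbounded, and with the gap to `r₀`
increasing it tends to `+∞`; a characteristic starting below `r₀` that stayed positive would make
the bounded `r₀` unbounded, so it vanishes at some finite time.
-/

open MeasureTheory Filter Set

lemma le_of_hasDerivWithinAt_Ici_of_eq_imp_pos {f f' : ℝ → ℝ} {t c : ℝ}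
    (hf : ∀ x ∈ Ici t, HasDerivWithinAt f (f' x) (Ici t) x) (ht : c ≤ f t)
    (hcross : ∀ x ∈ Ici t, f x = c → 0 < f' x) : ∀ x ∈ Ici t, c ≤ f x := by
  intro x hx
  have key := image_le_of_deriv_right_lt_deriv_boundary (a := t) (b := x)
    (f := fun y => -f y) (f' := fun y => -f' y) (B := fun _ => -c) (B' := fun _ => 0)
    (fun y hy => (hf y hy.1).continuousWithinAt.neg.mono Icc_subset_Ici_self)
    (fun y hy => (hf y hy.1).neg.mono (Ici_subset_Ici.2 hy.1)) (neg_le_neg ht)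
    (fun _ => hasDerivAt_const _ _)
    (fun y hy hyc => by linarith [hcross y hy.1 (by linarith)])
  linarith [key ⟨hx, le_rfl⟩]

lemma add_mul_sub_le_of_le_hasDerivWithinAt_Ici {f f' : ℝ → ℝ} {t ε : ℝ}
    (hf : ∀ x ∈ Ici t, HasDerivWithinAt f (f' x) (Ici t) x) (hε : ∀ x ∈ Ici t, ε ≤ f' x) :
    ∀ x ∈ Ici t, f t + ε * (x - t) ≤ f x := by
  intro x hx
  have hline : ∀ y, HasDerivAt (fun y => f t + ε * (y - t)) ε y := fun y => by
    simpa using ((hasDerivAt_id y).sub_const t).const_mul ε |>.const_add (f t)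
  exact image_le_of_deriv_right_le_deriv_boundary (a := t) (b := x)
    (fun y _ => (hline y).continuousAt.continuousWithinAt)
    (fun y _ => (hline y).hasDerivWithinAt) (by simp)
    (fun y hy => (hf y hy.1).continuousWithinAt.mono Icc_subset_Ici_self)
    (fun y hy => (hf y hy.1).mono (Ici_subset_Ici.2 hy.1))
    (fun y hy => hε y hy.1) ⟨hx, le_rfl⟩

lemma tendsto_atTop_of_le_hasDerivWithinAt_Ici {f f' : ℝ → ℝ} {t ε : ℝ} (hε₀ : 0 < ε)
    (hf : ∀ x ∈ Ici t, HasDerivWithinAt f (f' x) (Ici t) x) (hε : ∀ x ∈ Ici t, ε ≤ f' x) :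
    Tendsto f atTop atTop := by
  have hline : Tendsto (fun x => f t + ε * (x - t)) atTop atTop :=
    tendsto_atTop_add_const_left _ _
      ((tendsto_atTop_add_const_right _ _ tendsto_id).const_mul_atTop hε₀)
  refine tendsto_atTop_mono' atTop ?_ hline
  filter_upwards [eventually_ge_atTop t] with x hx
  exact add_mul_sub_le_of_le_hasDerivWithinAt_Ici hf hε x hx

lemma tendsto_atTop_of_monotoneOn_Ici {f : ℝ → ℝ} {t : ℝ} (hf : MonotoneOn f (Ici t))
    (hunb : ¬ BddAbove (f '' Ici t)) : Tendsto f atTop atTop := by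
  refine tendsto_atTop_atTop.2 fun K => ?_
  obtain ⟨_, ⟨x, hx, rfl⟩, hK⟩ := not_bddAbove_iff.1 hunb K
  exact ⟨x, fun y hy => hK.le.trans (hf hx (hx.trans hy) hy)⟩

lemma div_add_one_sub_div_add_one (a : ℝ) {r s : ℝ} (hr : r ≠ 0) (hs : s ≠ 0) :
    (a / r + 1) - (a / s + 1) = -a * (r - s) / (r * s) := by
  field_simp
  ring

def IsCharacteristicFrom (A : ℝ → ℝ) (t : ℝ) (r : ℝ → ℝ) : Prop :=
  ∀ x ∈ Ici t, HasDerivWithinAt r (A x / r x + 1) (Ici t) x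

namespace IsCharacteristicFrom

variable {A r s : ℝ → ℝ} {t : ℝ}

lemma sub_le_sub (hA : ∀ x, A x < 0) (hr : IsCharacteristicFrom A t r)
    (hs : IsCharacteristicFrom A t s) (hs_pos : ∀ x ∈ Ici t, 0 < s x) (hst : s t < r t) :
    ∀ x ∈ Ici t, r t - s t ≤ r x - s x := by
  refine le_of_hasDerivWithinAt_Ici_of_eq_imp_pos (fun x hx => (hr x hx).sub (hs x hx)) le_rfl ?_
  intro x hx hgap
  have hr_pos : 0 < r x := by linarith [hs_pos x hx]
  rw [div_add_one_sub_div_add_one _ hr_pos.ne' (hs_pos x hx).ne', hgap]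
  exact div_pos (mul_pos (neg_pos.2 (hA x)) (sub_pos.2 hst)) (mul_pos hr_pos (hs_pos x hx))

lemma mono (hr : IsCharacteristicFrom A t r) {t' : ℝ} (htt' : t ≤ t') :
    IsCharacteristicFrom A t' r := fun x hx =>
  (hr x (htt'.trans hx)).mono (Ici_subset_Ici.2 htt')

lemma monotoneOn_sub (hA : ∀ x, A x < 0) (hr : IsCharacteristicFrom A t r)
    (hs : IsCharacteristicFrom A t s) (hs_pos : ∀ x ∈ Ici t, 0 < s x) (hst : s t < r t) :
    MonotoneOn (fun x => r x - s x) (Ici t) := by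
  intro x hx y _ hxy
  have hsx : s x < r x := by linarith [sub_le_sub hA hr hs hs_pos hst x hx]
  exact sub_le_sub hA (hr.mono hx) (hs.mono hx) (fun z hz => hs_pos z (Ici_subset_Ici.2 hx hz))
    hsx y hxy

lemma not_bddAbove {a₀ : ℝ} (ha₀ : 0 < a₀) (hA : ∀ x, A x ≤ -a₀)
    (hr : IsCharacteristicFrom A t r) (hs : IsCharacteristicFrom A t s)
    (hs_pos : ∀ x ∈ Ici t, 0 < s x) (hst : s t < r t) : ¬ BddAbove (r '' Ici t) := by
  rintro ⟨M, hM⟩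
  have hrM : ∀ x ∈ Ici t, r x ≤ M := fun x hx => hM (mem_image_of_mem r hx)
  have hA_neg : ∀ x, A x < 0 := fun x => (hA x).trans_lt (neg_neg_of_pos ha₀)
  have hgap := sub_le_sub hA_neg hr hs hs_pos hst
  set c := r t - s t
  have hc : 0 < c := sub_pos.2 hst
  have hM_pos : 0 < M := (hs_pos t self_mem_Ici).trans (hst.trans_le (hrM t self_mem_Ici))
  have hderiv : ∀ x ∈ Ici t, a₀ * c / (M * M) ≤ (A x / r x + 1) - (A x / s x + 1) := by
    intro x hx
    have hsx := hs_pos x hx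
    have hrx : 0 < r x := by linarith [hgap x hx]
    rw [div_add_one_sub_div_add_one _ hrx.ne' hsx.ne']
    refine div_le_div₀ (by nlinarith [hA x, hgap x hx]) ?_ (mul_pos hrx hsx) ?_
    · exact mul_le_mul (by linarith [hA x]) (hgap x hx) hc.le (by linarith [hA x])
    · exact mul_le_mul (hrM x hx) (by linarith [hrM x hx, hgap x hx]) hsx.le hM_pos.le
  have hlim : Tendsto (fun x => r x - s x) atTop atTop :=
    tendsto_atTop_of_le_hasDerivWithinAt_Ici (by positivity)
    (fun x hx => (hr x hx).sub (hs x hx)) hderiv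
  obtain ⟨x, hx, hxt⟩ := ((hlim.eventually_gt_atTop M).and (eventually_ge_atTop t)).exists
  linarith [hrM x hxt, hs_pos x hxt]

lemma tendsto_atTop (hA : ∀ x, A x < 0) (hr : IsCharacteristicFrom A t r)
    (hs : IsCharacteristicFrom A t s) (hs_pos : ∀ x ∈ Ici t, 0 < s x)
    (hs_bdd : BddAbove (s '' Ici t)) (hst : s t < r t) (hr_unbdd : ¬ BddAbove (r '' Ici t)) :
    Tendsto r atTop atTop := by
  obtain ⟨S, hS⟩ := hs_bdd
  have hgap_unbdd : ¬ BddAbove ((fun x => r x - s x) '' Ici t) := by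
    rintro ⟨K, hK⟩
    refine hr_unbdd ⟨K + S, ?_⟩
    rintro _ ⟨x, hx, rfl⟩
    linarith [hK (mem_image_of_mem _ hx), hS (mem_image_of_mem s hx)]
  refine tendsto_atTop_mono' atTop ?_
    (tendsto_atTop_of_monotoneOn_Ici (monotoneOn_sub hA hr hs hs_pos hst) hgap_unbdd)
  filter_upwards [eventually_ge_atTop t] with x hx
  linarith [hs_pos x hx]

end IsCharacteristicFrom

theorem acoustic_horizon_separatrix (A : ℝ → ℝ)
    (a₀ : ℝ) (ha₀ : 0 < a₀) (hAneg : ∀ x, A x ≤ -a₀)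
    (r₀ : ℝ → ℝ) (hr₀pos : ∀ x, 0 < r₀ x) (hr₀bdd : ∃ M, ∀ x, r₀ x ≤ M)
    (hr₀ode : ∀ x, HasDerivAt r₀ (A x / r₀ x + 1) x) :
    (∀ t : ℝ, ∀ r : ℝ → ℝ,
      (∀ x ∈ Set.Ici t, HasDerivWithinAt r (A x / r x + 1) (Set.Ici t) x) →
      r₀ t < r t →
      (∀ x ∈ Set.Ici t, 0 < r x) ∧ Tendsto r atTop atTop) ∧
    (∀ t : ℝ, ∀ r : ℝ → ℝ,
      (∀ x ∈ Set.Ici t, HasDerivWithinAt r (A x / r x + 1) (Set.Ici t) x) →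
      0 < r t → r t < r₀ t →
      ¬ (∀ x ∈ Set.Ici t, 0 < r x) ∧
      ∃ x₁ > t, Tendsto r (nhdsWithin x₁ (Set.Iio x₁)) (nhds 0)) := by
  have hA_neg : ∀ x, A x < 0 := fun x => (hAneg x).trans_lt (neg_neg_of_pos ha₀)
  have hr₀ (t : ℝ) : IsCharacteristicFrom A t r₀ := fun x _ => (hr₀ode x).hasDerivWithinAt
  have hr₀_bdd (t : ℝ) : BddAbove (r₀ '' Ici t) := by
    obtain ⟨M, hM⟩ := hr₀bdd
    exact ⟨M, by rintro _ ⟨x, -, rfl⟩; exact hM x⟩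
  have hr₀_pos (t : ℝ) : ∀ x ∈ Ici t, 0 < r₀ x := fun x _ => hr₀pos x
  refine ⟨fun t r hr hr₀r => ?_, fun t r hr hr_pos hrr₀ => ?_⟩
  · have hr : IsCharacteristicFrom A t r := hr
    have hpos : ∀ x ∈ Ici t, 0 < r x := fun x hx => by
      linarith [hr.sub_le_sub hA_neg (hr₀ t) (hr₀_pos t) hr₀r x hx, hr₀pos x]
    exact ⟨hpos, hr.tendsto_atTop hA_neg (hr₀ t) (hr₀_pos t) (hr₀_bdd t) hr₀r
      (hr.not_bddAbove ha₀ hAneg (hr₀ t) (hr₀_pos t) hr₀r)⟩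
  · have hnot : ¬ ∀ x ∈ Ici t, 0 < r x := fun hpos =>
      (hr₀ t).not_bddAbove ha₀ hAneg hr hpos hrr₀ (hr₀_bdd t)
    refine ⟨hnot, ?_⟩
    push Not at hnot
    obtain ⟨b, hb, hrb⟩ := hnot
    obtain ⟨x₁, ⟨htx₁, -⟩, hrx₁⟩ := intermediate_value_Icc' hb
      (fun x hx => (hr x hx.1).continuousWithinAt.mono Icc_subset_Ici_self) ⟨hrb, hr_pos.le⟩
    have htx₁ : t < x₁ := htx₁.lt_of_ne (by rintro rfl; linarith)
    refine ⟨x₁, htx₁, ?_⟩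
    rw [← hrx₁]
    exact ((hr x₁ htx₁.le).hasDerivAt (Ici_mem_nhds htx₁)).continuousAt.tendsto.mono_left
      nhdsWithin_le_nhds
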